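/- For every integer a ≥ 2 and every real x ∈ [1/2, 1 − 2^{-a}], the relative toll satisfies (ν(x) − x·log₂(1/x))/x < 2 − 2^{-a}·(a − 2 + 1/ln 2). -/

import Mathlib

/-!
Put `y = 1 - x` and pick `n ≥ 1` with `2⁻⁽ⁿ⁺¹⁾ < y ≤ 2⁻ⁿ`. The binary digits `ε₁, …, εₙ` of `x` are
then all `1`, so `2 - ν(x) = ∑ d (1 - ε_d) 2⁻ᵈ ≥ (n + 1) ∑_{d > n} (1 - ε_d) 2⁻ᵈ = (n + 1) y`.
Together with `log₂ x < -y / ln 2` this bounds the relative toll by `2 - y (n - 1 + c)`, `c = 1 / ln 2`.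
Finally `m ↦ 2⁻ᵐ (m - 2 + c)` is non-increasing for `m ≥ 2` because `c ≥ 1`, which yields
`y (n - 1 + c) ≥ 2⁻ᵃ (a - 2 + c)` in both cases `a ≤ n + 1` and `a > n + 1`.
-/

noncomputable def epsBit (d : ℕ) (x : ℝ) : ℝ := ((⌊2 ^ d * x⌋ % 2 : ℤ) : ℝ)

noncomputable def nu (x : ℝ) : ℝ := ∑' d : ℕ, (d : ℝ) * epsBit d x / 2 ^ d

lemma epsBit_nonneg (d : ℕ) (x : ℝ) : 0 ≤ epsBit d x := by
  unfold epsBit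
  exact_mod_cast Int.emod_nonneg _ two_ne_zero

lemma epsBit_le_one (d : ℕ) (x : ℝ) : epsBit d x ≤ 1 := by
  unfold epsBit
  have : ⌊2 ^ d * x⌋ % 2 ≤ 1 := Int.lt_add_one_iff.mp (Int.emod_lt_of_pos _ two_pos)
  exact_mod_cast this

lemma epsBit_zero {x : ℝ} (hx : x ∈ Set.Ico 0 1) : epsBit 0 x = 0 := by
  simp [epsBit, Int.floor_eq_zero_iff.mpr hx]

lemma epsBit_succ_eq_digits {x : ℝ} (hx : 0 ≤ x) (i : ℕ) :
    epsBit (i + 1) x = (Real.digits x 2 i : ℕ) := by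
  rw [epsBit, Real.digits, Fin.val_ofNat, ← Int.natCast_floor_eq_floor (by positivity), mul_comm]
  norm_cast

lemma hasSum_epsBit {x : ℝ} (hx : x ∈ Set.Ico 0 1) :
    HasSum (fun d : ℕ => epsBit d x / 2 ^ d) x := by
  have hterms : (fun i : ℕ => epsBit (i + 1) x / 2 ^ (i + 1)) =
      Real.ofDigitsTerm (Real.digits x 2) := by
    ext i
    simp [Real.ofDigitsTerm, epsBit_succ_eq_digits hx.1, div_eq_mul_inv]
  rw [← hasSum_nat_add_iff' 1, hterms]
  simpa [epsBit_zero hx] using Real.hasSum_ofDigitsTerm_digits x one_lt_two hx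

lemma hasSum_one_div_two_pow : HasSum (fun d : ℕ => 1 / (2 : ℝ) ^ d) 2 := by
  simpa [one_div_pow] using hasSum_geometric_two

lemma hasSum_coe_div_two_pow : HasSum (fun d : ℕ => (d : ℝ) / 2 ^ d) 2 := by
  have h := hasSum_coe_mul_geometric_of_norm_lt_one (r := (1 / 2 : ℝ)) (by norm_num)
  rw [show (1 / 2 : ℝ) / (1 - 1 / 2) ^ 2 = 2 by norm_num] at h
  exact h.congr_fun fun d => by simp [div_eq_mul_inv]

lemma hasSum_nu (x : ℝ) : HasSum (fun d : ℕ => (d : ℝ) * epsBit d x / 2 ^ d) (nu x) := by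
  refine (Summable.of_nonneg_of_le (fun (d : ℕ) => ?_) (fun (d : ℕ) => ?_)
    hasSum_coe_div_two_pow.summable).hasSum
  · have := epsBit_nonneg d x
    positivity
  · gcongr
    exact mul_le_of_le_one_right d.cast_nonneg (epsBit_le_one d x)

lemma epsBit_eq_one {x : ℝ} {n d : ℕ} (hd : 1 ≤ d) (hdn : d ≤ n)
    (hx : 1 - 1 / 2 ^ n ≤ x) (hx1 : x < 1) : epsBit d x = 1 := by
  have hfloor : ⌊(2 : ℝ) ^ d * x⌋ = 2 ^ d - 1 := by
    have h2d : (0 : ℝ) < 2 ^ d := by positivity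
    have hdn' : (2 : ℝ) ^ d / 2 ^ n ≤ 1 :=
      div_le_one_of_le₀ (pow_le_pow_right₀ one_le_two hdn) (by positivity)
    rw [Int.floor_eq_iff]
    push_cast
    have hlow : (2 : ℝ) ^ d * (1 - 1 / 2 ^ n) = 2 ^ d - 2 ^ d / 2 ^ n := by ring
    constructor <;> nlinarith [mul_le_mul_of_nonneg_left hx h2d.le]
  have hodd : Odd ((2 : ℤ) ^ d - 1) := (Int.even_pow.mpr ⟨even_two, by omega⟩).sub_odd odd_one
  simp [epsBit, hfloor, Int.odd_iff.mp hodd]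

lemma nu_le_two_sub {x : ℝ} {n : ℕ} (hx : 1 - 1 / 2 ^ n ≤ x) (hx1 : x < 1) :
    nu x ≤ 2 - (n + 1) * (1 - x) := by
  have hx0 : 0 ≤ x := by
    have : (1 : ℝ) / 2 ^ n ≤ 1 := div_le_one_of_le₀ (one_le_pow₀ one_le_two) (by positivity)
    linarith
  have hsum : HasSum (fun d : ℕ => ((d : ℝ) - (n + 1)) * (1 - epsBit d x) / 2 ^ d)
      ((2 - nu x) - (n + 1) * (2 - x)) := by
    refine ((hasSum_coe_div_two_pow.sub (hasSum_nu x)).sub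
      ((hasSum_one_div_two_pow.sub (hasSum_epsBit ⟨hx0, hx1⟩)).mul_left ((n : ℝ) + 1))).congr_fun
      fun d => ?_
    ring
  have hterm : ∀ d : ℕ, d ≠ 0 → 0 ≤ ((d : ℝ) - (n + 1)) * (1 - epsBit d x) / 2 ^ d := by
    intro d hd
    rcases le_or_gt d n with hdn | hnd
    · simp [epsBit_eq_one (Nat.one_le_iff_ne_zero.mpr hd) hdn hx hx1]
    · have : (n : ℝ) + 1 ≤ d := by exact_mod_cast hnd
      have := epsBit_le_one d x
      apply div_nonneg (mul_nonneg _ _) (by positivity) <;> linarith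
  have hterm0 : (((0 : ℕ) : ℝ) - (n + 1)) * (1 - epsBit 0 x) / 2 ^ 0 = -(n + 1) := by
    simp [epsBit_zero ⟨hx0, hx1⟩]
  linarith [le_hasSum hsum 0 hterm]

lemma exists_one_div_two_pow_lt_le {y : ℝ} (hy0 : 0 < y) (hy : y ≤ 1 / 2) :
    ∃ n : ℕ, 1 ≤ n ∧ 1 / 2 ^ (n + 1) < y ∧ y ≤ 1 / 2 ^ n := by
  obtain ⟨n, hle, hlt⟩ := exists_nat_pow_near (x := 1 / y) (y := (2 : ℝ))
    (by rw [le_div_iff₀ hy0]; linarith) one_lt_two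
  refine ⟨n, ?_, (one_div_lt (by positivity) hy0).2 hlt, (le_one_div hy0 (by positivity)).2 hle⟩
  by_contra! hn
  have : 2 ≤ 1 / y := by rw [le_div_iff₀ hy0]; linarith
  rw [Nat.lt_one_iff.mp hn, zero_add, pow_one] at hlt
  linarith

lemma add_le_mul_two_pow {u : ℝ} (hu : 1 ≤ u) (j : ℕ) : u + j ≤ u * 2 ^ j := by
  have hj : (j : ℝ) + 1 ≤ 2 ^ j := by exact_mod_cast Nat.lt_two_pow_self
  nlinarith

lemma one_div_two_pow_mul_le {c y : ℝ} (hc : 1 ≤ c) {a n : ℕ} (ha : 2 ≤ a) (hn : 1 ≤ n)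
    (hya : 1 / 2 ^ a ≤ y) (hyn : 1 / 2 ^ (n + 1) < y) :
    1 / 2 ^ a * ((a : ℝ) - 2 + c) ≤ y * ((n : ℝ) - 1 + c) := by
  rcases le_or_gt a (n + 1) with han | hna
  · have : (a : ℝ) ≤ n + 1 := by exact_mod_cast han
    have : (2 : ℝ) ≤ a := by exact_mod_cast ha
    exact mul_le_mul hya (by linarith) (by linarith) (hya.trans' (by positivity))
  · obtain ⟨j, rfl⟩ := Nat.exists_eq_add_of_le hna.le
    have hu : 1 ≤ (n : ℝ) - 1 + c := by
      have : (1 : ℝ) ≤ n := by exact_mod_cast hn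
      linarith
    calc 1 / 2 ^ (n + 1 + j) * (((n + 1 + j : ℕ) : ℝ) - 2 + c)
        = 1 / 2 ^ (n + 1) * (((n : ℝ) - 1 + c + j) / 2 ^ j) := by
          push_cast; field_simp; ring
      _ ≤ 1 / 2 ^ (n + 1) * ((n : ℝ) - 1 + c) := by
          gcongr
          exact div_le_of_le_mul₀ (by positivity) (by linarith) (add_le_mul_two_pow hu j)
      _ ≤ y * ((n : ℝ) - 1 + c) := by gcongr

lemma logb_lt_sub_one_div_log {b x : ℝ} (hb : 1 < b) (hx : 0 < x) (hx1 : x ≠ 1) :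
    Real.logb b x < (x - 1) / Real.log b :=
  div_lt_div_of_pos_right (Real.log_lt_sub_one_of_pos hx hx1) (Real.log_pos hb)

theorem relative_toll_constant_bound (a : ℕ) (ha : 2 ≤ a) :
    ∀ x : ℝ, 1 / 2 ≤ x → x ≤ 1 - 1 / 2 ^ a →
      (nu x - x * Real.logb 2 (1 / x)) / x
        < 2 - (1 / 2 ^ a) * ((a : ℝ) - 2 + 1 / Real.log 2) := by
  intro x hx hxa
  have hx0 : 0 < x := by linarith
  have hya : 1 / 2 ^ a ≤ 1 - x := by linarith
  have hy0 : 0 < 1 - x := hya.trans_lt' (by positivity)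
  have hc : 1 ≤ 1 / Real.log 2 := by
    rw [le_one_div one_pos (Real.log_pos one_lt_two)]
    linarith [Real.log_two_lt_d9]
  obtain ⟨n, hn, hyn, hny⟩ := exists_one_div_two_pow_lt_le hy0 (by linarith)
  have hnu : nu x ≤ x * (2 - (n - 1) * (1 - x)) := by
    have : (1 : ℝ) ≤ n := by exact_mod_cast hn
    nlinarith [nu_le_two_sub (x := x) (n := n) (by linarith) (by linarith),
      mul_nonneg (sub_nonneg.2 this) (sq_nonneg (1 - x))]
  calc (nu x - x * Real.logb 2 (1 / x)) / x = nu x / x + Real.logb 2 x := by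
        rw [one_div, Real.logb_inv]
        field_simp
        ring
    _ < (2 - (n - 1) * (1 - x)) + (x - 1) / Real.log 2 :=
        add_lt_add_of_le_of_lt ((div_le_iff₀' hx0).2 hnu)
          (logb_lt_sub_one_div_log one_lt_two hx0 (by linarith))
    _ = 2 - (1 - x) * ((n : ℝ) - 1 + 1 / Real.log 2) := by ring
    _ ≤ 2 - (1 / 2 ^ a) * ((a : ℝ) - 2 + 1 / Real.log 2) := by
        linarith [one_div_two_pow_mul_le hc ha hn hya hyn]
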